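/- For a pseudo-ball B of height r and f ∈ ℂ[[x,y]] with ord f(0,y) = n finite and 1 < n, if k < deg F_B(z) then (d^k/dz^k) F_B(z) = constant · ∏_{γ_j ∈ B ∩ Zer ∂^k f/∂y^k} (z − lc_B γ_j), where γ_j runs over the Newton–Puiseux roots of ∂^k f/∂y^k lying in B. -/

import Mathlib

attribute [local instance] Classical.propDecidable

open Polynomial

/-!
STATEMENT 13 (Lemma on derivatives of `F_B`).  Power series
`f ∈ ℂ[[x,y]]` are modelled as `PowerSeries (PowerSeries ℂ)` (`y`-series
with coefficients in `ℂ[[x]]`), and Puiseux series by coefficient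
functions `ℚ → ℂ`.  `stretchF m f` is the image of `f` in
`ℂ[[x^{1/m}]][[y]]` (i.e. `x ↦ x^m` on coefficients), and the
Newton–Puiseux factorizations of `f` and of `∂^k f/∂y^k` are given as
hypotheses, with roots `αs`, `γs` lying in `ℂ[[x^{1/m}]]`.  For a
pseudo-ball `B` of height `r` with `k < deg F_B`,
`(d^k/dz^k) F_B(z) = c·∏_{γⱼ ∈ B}(z − lc_B γⱼ)` for a nonzero constant
`c`, where `F_B(z) = ∏_{αⱼ ∈ B}(z − lc_B αⱼ)` and `lc_B γ = γ r`.
-/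

abbrev PSer : Type := ℚ → ℂ

def contGe (φ ψ : PSer) (r : ℚ) : Prop := ∀ q : ℚ, q < r → φ q = ψ q

def pball (β : PSer) (r : ℚ) : Set PSer := {ψ | contGe β ψ r}

def hasDen (m : ℕ) (φ : PSer) : Prop := ∀ q : ℚ, φ q ≠ 0 → ∃ i : ℕ, q = (i : ℚ) / m

def posOrder (φ : PSer) : Prop := ∀ q : ℚ, q ≤ 0 → φ q = 0

/-- The power series `Σᵢ φ(i/m)·t^i`, i.e. `φ ∈ ℂ[[x^{1/m}]]` written in the
variable `t = x^{1/m}`. -/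
noncomputable def toPS (m : ℕ) (φ : PSer) : PowerSeries ℂ :=
  PowerSeries.mk fun i => φ ((i : ℚ) / m)

/-- `ℂ[[x]] → ℂ[[x^{1/m}]]`, substituting `x = t^m`. -/
noncomputable def stretch (m : ℕ) (c : PowerSeries ℂ) : PowerSeries ℂ :=
  PowerSeries.mk fun i => if m ∣ i then PowerSeries.coeff (R := ℂ) (i / m) c else 0

/-- `ℂ[[x]][[y]] → ℂ[[x^{1/m}]][[y]]`, substituting `x = t^m` in each
coefficient. -/
noncomputable def stretchF (m : ℕ) (f : PowerSeries (PowerSeries ℂ)) :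
    PowerSeries (PowerSeries ℂ) :=
  PowerSeries.mk fun j => stretch m (PowerSeries.coeff (R := PowerSeries ℂ) j f)

/-!
Put all roots on the common grid `t = x ^ (1 / m')` on which `N = r · m'` is an integer, and
substitute `y = λ_B(t) + t ^ N z`, where `λ_B` is the truncation of the centre of `B` below `t ^ N`.
A factor `y - α` becomes `t ^ N (z - lc_B α) + O(t ^ (N + 1))` when `α ∈ B`, and `c t ^ e + …` with
a constant `c ≠ 0` otherwise. Hence the lowest-order term in `t` of the substituted `f` is a
nonzero constant times `t ^ e F_B(z)`, and likewise for `∂^k f / ∂y^k` and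
`∏_{γ ∈ B} (z - lc_B γ)`. The chain rule `∂/∂z (g(λ_B + t ^ N z)) = t ^ N (∂g/∂y)(λ_B + t ^ N z)`
shows that `∂^k/∂z^k` of the substituted `f` is `t ^ (k N)` times the substituted
`∂^k f / ∂y^k`; comparing lowest-order terms, which are nonzero because `k < deg F_B`, proves the
claim.
-/

open scoped PowerSeries

namespace PowerSeries

section InitialTerm

variable {R S : Type*} [CommRing R] [CommRing S]

/-- `a` may be `0`, so `e` need not be the order of `P`. -/
def HasInitialTerm (P : R⟦X⟧) (e : ℕ) (a : R) : Prop :=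
  ∃ Q : R⟦X⟧, P = X ^ e * Q ∧ constantCoeff Q = a

variable {P P' : R⟦X⟧} {e e' : ℕ} {a b : R}

theorem hasInitialTerm_zero (P : R⟦X⟧) : HasInitialTerm P 0 (constantCoeff P) :=
  ⟨P, by rw [pow_zero, one_mul], rfl⟩

theorem hasInitialTerm_of_coeff_eq_zero (h : ∀ i < e, coeff i P = 0) :
    HasInitialTerm P e (coeff e P) := by
  obtain ⟨Q, rfl⟩ := X_pow_dvd_iff.2 h
  exact ⟨Q, rfl, by simp [coeff_X_pow_mul']⟩

theorem HasInitialTerm.coeff_of_lt (h : HasInitialTerm P e a) {i : ℕ} (hi : i < e) :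
    coeff i P = 0 := by
  obtain ⟨Q, rfl, -⟩ := h
  simp [coeff_X_pow_mul', hi.not_ge]

theorem HasInitialTerm.coeff_self (h : HasInitialTerm P e a) : coeff e P = a := by
  obtain ⟨Q, rfl, rfl⟩ := h
  simp [coeff_X_pow_mul']

theorem HasInitialTerm.eq (h : HasInitialTerm P e a) (h' : HasInitialTerm P e' b)
    (ha : a ≠ 0) (hb : b ≠ 0) : a = b := by
  obtain hlt | rfl | hgt := lt_trichotomy e e'
  · exact absurd (h.coeff_self.symm.trans (h'.coeff_of_lt hlt)) ha
  · exact h.coeff_self.symm.trans h'.coeff_self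
  · exact absurd (h'.coeff_self.symm.trans (h.coeff_of_lt hgt)) hb

theorem HasInitialTerm.add (h : HasInitialTerm P e a) (h' : HasInitialTerm P' e b) :
    HasInitialTerm (P + P') e (a + b) := by
  obtain ⟨Q, rfl, rfl⟩ := h
  obtain ⟨Q', rfl, rfl⟩ := h'
  exact ⟨Q + Q', (mul_add _ _ _).symm, map_add _ _ _⟩

theorem HasInitialTerm.mul (h : HasInitialTerm P e a) (h' : HasInitialTerm P' e' b) :
    HasInitialTerm (P * P') (e + e') (a * b) := by
  obtain ⟨Q, rfl, rfl⟩ := h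
  obtain ⟨Q', rfl, rfl⟩ := h'
  exact ⟨Q * Q', by ring, map_mul _ _ _⟩

theorem HasInitialTerm.prod {ι : Type*} (s : Finset ι) {P : ι → R⟦X⟧} {e : ι → ℕ} {a : ι → R}
    (h : ∀ i ∈ s, HasInitialTerm (P i) (e i) (a i)) :
    HasInitialTerm (∏ i ∈ s, P i) (∑ i ∈ s, e i) (∏ i ∈ s, a i) := by
  induction s using Finset.cons_induction with
  | empty => exact ⟨1, by simp, map_one _⟩
  | cons i s hi ih =>
    simp only [Finset.prod_cons, Finset.sum_cons]
    exact (h i (Finset.mem_cons_self i s)).mul (ih fun j hj => h j (Finset.mem_cons_of_mem hj))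

theorem HasInitialTerm.X_pow_mul (h : HasInitialTerm P e a) (n : ℕ) :
    HasInitialTerm (X ^ n * P) (n + e) a := by
  have hX : HasInitialTerm (X ^ n : R⟦X⟧) n 1 := ⟨1, by rw [mul_one], map_one _⟩
  simpa using hX.mul h

theorem HasInitialTerm.of_lt (h : HasInitialTerm P e a) {d : ℕ} (hd : d < e) :
    HasInitialTerm P d 0 := by
  obtain ⟨Q, rfl, -⟩ := h
  refine ⟨X ^ (e - d) * Q, ?_, ?_⟩
  · rw [← mul_assoc, ← pow_add, Nat.add_sub_cancel' hd.le]
  · rw [map_mul, map_pow, constantCoeff_X, zero_pow (Nat.sub_ne_zero_of_lt hd), zero_mul]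

theorem HasInitialTerm.map (h : HasInitialTerm P e a) (f : R →+* S) :
    HasInitialTerm (map f P) e (f a) := by
  obtain ⟨Q, rfl, rfl⟩ := h
  refine ⟨map f Q, by rw [map_mul, map_pow, map_X], ?_⟩
  rw [← coeff_zero_eq_constantCoeff_apply, coeff_map, coeff_zero_eq_constantCoeff_apply]

end InitialTerm

section Eval₂Trunc

variable {A S : Type*} [CommRing A] [CommRing S] {σ : A →+* S⟦X⟧} {W : S⟦X⟧}

theorem eq_of_forall_X_pow_dvd_sub {P Q : S⟦X⟧} (h : ∀ n, X ^ n ∣ P - Q) : P = Q := by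
  ext i
  simpa [sub_eq_zero] using X_pow_dvd_iff.1 (h (i + 1)) i (lt_add_one i)

theorem X_pow_dvd_eval₂ (hW : constantCoeff W = 0) {n : ℕ} {p : A[X]}
    (hp : Polynomial.X ^ n ∣ p) : X ^ n ∣ p.eval₂ σ W := by
  obtain ⟨q, rfl⟩ := hp
  rw [Polynomial.eval₂_mul, Polynomial.eval₂_X_pow]
  exact (pow_dvd_pow_of_dvd (X_dvd_iff.2 hW) n).mul_right _

theorem X_pow_dvd_trunc_sub_trunc (g : A⟦X⟧) {m n : ℕ} (h : m ≤ n) :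
    Polynomial.X ^ m ∣ trunc n g - trunc m g := by
  refine Polynomial.X_pow_dvd_iff.2 fun i hi => ?_
  simp [coeff_trunc, hi, hi.trans_le h]

theorem X_pow_dvd_trunc_mul_sub (g h : A⟦X⟧) (n : ℕ) :
    Polynomial.X ^ n ∣ trunc n (g * h) - trunc n g * trunc n h := by
  refine Polynomial.X_pow_dvd_iff.2 fun i hi => ?_
  have := congrArg (Polynomial.coeff · i) (trunc_trunc_mul_trunc g h (n := n))
  rw [coeff_trunc, if_pos hi, coeff_trunc, if_pos hi] at this
  rw [Polynomial.coeff_sub, coeff_trunc, if_pos hi, ← this, ← Polynomial.coe_mul,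
    Polynomial.coeff_coe, sub_self]

variable (σ W) in
/-- The series `g(W)`, the coefficients of `g` being mapped by `σ`; it is a ring homomorphism
in `g` as soon as `W` has no constant term. -/
noncomputable def eval₂Trunc (g : A⟦X⟧) : S⟦X⟧ :=
  mk fun i => coeff i ((trunc (i + 1) g).eval₂ σ W)

theorem X_pow_dvd_eval₂Trunc_sub (hW : constantCoeff W = 0) (g : A⟦X⟧) (n : ℕ) :
    X ^ n ∣ eval₂Trunc σ W g - (trunc n g).eval₂ σ W := by
  refine X_pow_dvd_iff.2 fun i hi => ?_
  have := X_pow_dvd_iff.1 (X_pow_dvd_eval₂ (σ := σ) hW (X_pow_dvd_trunc_sub_trunc g hi))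
    i (lt_add_one i)
  rw [Polynomial.eval₂_sub, map_sub, sub_eq_zero] at this
  rw [map_sub, eval₂Trunc, coeff_mk, this, sub_self]

theorem eval₂Trunc_coe (hW : constantCoeff W = 0) (p : A[X]) :
    eval₂Trunc σ W p = p.eval₂ σ W := by
  refine eq_of_forall_X_pow_dvd_sub fun n => ?_
  have := X_pow_dvd_eval₂Trunc_sub (σ := σ) hW (p : A⟦X⟧) (max n (p.natDegree + 1))
  rw [trunc_coe_eq_self (by omega)] at this
  exact (pow_dvd_pow X (le_max_left _ _)).trans this

theorem eval₂Trunc_add (g h : A⟦X⟧) :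
    eval₂Trunc σ W (g + h) = eval₂Trunc σ W g + eval₂Trunc σ W h := by
  ext i
  simp [eval₂Trunc, Polynomial.eval₂_add]

theorem eval₂Trunc_mul (hW : constantCoeff W = 0) (g h : A⟦X⟧) :
    eval₂Trunc σ W (g * h) = eval₂Trunc σ W g * eval₂Trunc σ W h := by
  refine eq_of_forall_X_pow_dvd_sub fun n => ?_
  have hg := X_pow_dvd_eval₂Trunc_sub (σ := σ) hW g n
  have hh := X_pow_dvd_eval₂Trunc_sub (σ := σ) hW h n
  have hgh := X_pow_dvd_eval₂Trunc_sub (σ := σ) hW (g * h) n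
  have htr := X_pow_dvd_eval₂ (σ := σ) hW (X_pow_dvd_trunc_mul_sub g h n)
  rw [Polynomial.eval₂_sub, Polynomial.eval₂_mul] at htr
  convert (hgh.add htr).sub
    ((hg.mul_right ((trunc n h).eval₂ σ W)).add (hh.mul_left (eval₂Trunc σ W g))) using 1
  ring

variable (σ) in
noncomputable def eval₂TruncHom (hW : constantCoeff W = 0) : A⟦X⟧ →+* S⟦X⟧ where
  toFun := eval₂Trunc σ W
  map_one' := by simpa using eval₂Trunc_coe (σ := σ) hW 1
  map_mul' := eval₂Trunc_mul hW
  map_zero' := by simpa using eval₂Trunc_coe (σ := σ) hW 0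
  map_add' := eval₂Trunc_add

theorem eval₂TruncHom_apply (hW : constantCoeff W = 0) (g : A⟦X⟧) :
    eval₂TruncHom σ hW g = eval₂Trunc σ W g := rfl

theorem eval₂TruncHom_C (hW : constantCoeff W = 0) (a : A) : eval₂TruncHom σ hW (C a) = σ a := by
  simpa [eval₂TruncHom_apply] using eval₂Trunc_coe (σ := σ) hW (Polynomial.C a)

theorem eval₂TruncHom_X (hW : constantCoeff W = 0) : eval₂TruncHom σ hW X = W := by
  simpa [eval₂TruncHom_apply] using eval₂Trunc_coe (σ := σ) hW Polynomial.X

end Eval₂Trunc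


section ChainRule

variable {A S R : Type*} [CommRing A] [CommRing S] [CommRing R] [Algebra R S]
  {σ : A →+* S⟦X⟧} {W : S⟦X⟧} (D : Derivation R S⟦X⟧ S⟦X⟧)

theorem derivation_X_pow_mul (hDX : D X = 0) (n : ℕ) (P : S⟦X⟧) :
    D (X ^ n * P) = X ^ n * D P := by
  simp only [D.leibniz, D.leibniz_pow, hDX, mul_zero, smul_zero, add_zero, smul_eq_mul]

theorem derivation_eval₂ (hDσ : ∀ a, D (σ a) = 0) (p : A[X]) :
    D (p.eval₂ σ W) = (Polynomial.derivative p).eval₂ σ W * D W := by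
  induction p using Polynomial.induction_on' with
  | add p q hp hq => simp [Polynomial.eval₂_add, hp, hq, add_mul]
  | monomial n a =>
    rw [Polynomial.eval₂_monomial, Polynomial.derivative_monomial, Polynomial.eval₂_monomial,
      D.leibniz, D.leibniz_pow, hDσ, smul_zero, add_zero, map_mul, map_natCast]
    simp only [smul_eq_mul, nsmul_eq_mul]
    ring

theorem derivation_eval₂Trunc (hW : constantCoeff W = 0) (hDX : D X = 0)
    (hDσ : ∀ a, D (σ a) = 0) (g : A⟦X⟧) :
    D (eval₂Trunc σ W g) = eval₂Trunc σ W (d⁄dX A g) * D W := by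
  refine eq_of_forall_X_pow_dvd_sub fun n => ?_
  have hg : X ^ n ∣ D (eval₂Trunc σ W g - (trunc (n + 1) g).eval₂ σ W) := by
    obtain ⟨Q, hQ⟩ := X_pow_dvd_eval₂Trunc_sub (σ := σ) hW g (n + 1)
    rw [hQ, pow_succ, mul_assoc, derivation_X_pow_mul D hDX]
    exact dvd_mul_right _ _
  have hg' := X_pow_dvd_eval₂Trunc_sub (σ := σ) hW (d⁄dX A g) n
  rw [map_sub, derivation_eval₂ D hDσ, ← trunc_derivative] at hg
  convert hg.sub (hg'.mul_right (D W)) using 1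
  ring

theorem iterate_derivation_eval₂Trunc (hW : constantCoeff W = 0) (hDX : D X = 0)
    (hDσ : ∀ a, D (σ a) = 0) {N : ℕ} (hDW : D W = X ^ N) (g : A⟦X⟧) (n : ℕ) :
    (⇑D)^[n] (eval₂Trunc σ W g) = X ^ (n * N) * eval₂Trunc σ W ((d⁄dX A)^[n] g) := by
  induction n with
  | zero => simp
  | succ n ih =>
    rw [Function.iterate_succ_apply', ih, derivation_X_pow_mul D hDX,
      derivation_eval₂Trunc D hW hDX hDσ, hDW, Function.iterate_succ_apply']
    ring

end ChainRule

section DerivativeCoeffs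

variable (R : Type*) [CommRing R]

noncomputable def derivativeCoeffs : Derivation R R[X]⟦X⟧ R[X]⟦X⟧ where
  toFun P := mk fun n => Polynomial.derivative (coeff n P)
  map_add' P Q := by ext n; simp
  map_smul' r P := by ext n; simp
  map_one_eq_zero' := by ext n; simp [coeff_one, apply_ite]
  leibniz' P Q := by
    refine PowerSeries.ext fun n => ?_
    change coeff n (mk fun n => Polynomial.derivative (coeff n (P * Q))) = coeff n
      (P * mk (fun n => Polynomial.derivative (coeff n Q)) +
        Q * mk fun n => Polynomial.derivative (coeff n P))
    rw [mul_comm Q, add_comm]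
    simp only [coeff_mul, coeff_mk, map_add, map_sum, Polynomial.derivative_mul,
      Finset.sum_add_distrib]

variable {R}

theorem coeff_derivativeCoeffs (P : R[X]⟦X⟧) (n : ℕ) :
    coeff n (derivativeCoeffs R P) = Polynomial.derivative (coeff n P) :=
  coeff_mk (R := R[X]) n fun n => Polynomial.derivative (coeff n P)

theorem derivativeCoeffs_X : derivativeCoeffs R X = 0 := by
  ext n
  simp [coeff_derivativeCoeffs, coeff_X, apply_ite]

theorem derivativeCoeffs_map_C (a : R⟦X⟧) : derivativeCoeffs R (map Polynomial.C a) = 0 := by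
  ext n
  simp [coeff_derivativeCoeffs]

theorem derivativeCoeffs_C_X : derivativeCoeffs R (C Polynomial.X) = 1 := by
  ext n
  simp [coeff_derivativeCoeffs, coeff_C, coeff_one, apply_ite]

theorem HasInitialTerm.iterate_derivativeCoeffs {P : R[X]⟦X⟧} {e : ℕ} {a : R[X]}
    (h : HasInitialTerm P e a) (n : ℕ) :
    HasInitialTerm ((⇑(derivativeCoeffs R))^[n] P) e (Polynomial.derivative^[n] a) := by
  induction n with
  | zero => simpa using h
  | succ n ih =>
    obtain ⟨Q, hQ, hQa⟩ := ih
    refine ⟨derivativeCoeffs R Q, ?_, ?_⟩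
    · rw [Function.iterate_succ_apply', hQ, derivation_X_pow_mul _ derivativeCoeffs_X]
    · rw [Function.iterate_succ_apply', ← hQa, ← coeff_zero_eq_constantCoeff_apply,
        coeff_derivativeCoeffs, coeff_zero_eq_constantCoeff_apply]

end DerivativeCoeffs


theorem map_iterate_derivative {R S : Type*} [CommRing R] [CommRing S] (f : R →+* S)
    (n : ℕ) (g : R⟦X⟧) : map f ((d⁄dX R)^[n] g) = (d⁄dX S)^[n] (map f g) := by
  induction n generalizing g with
  | zero => rfl
  | succ n ih =>
    rw [Function.iterate_succ_apply', Function.iterate_succ_apply', ← ih]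
    ext i
    simp [coeff_derivative]

section BallCoordinate

variable {R : Type*} [CommRing R]

noncomputable def ballCoordinate (N : ℕ) (a : R⟦X⟧) : R[X]⟦X⟧ :=
  map Polynomial.C (trunc N a : R⟦X⟧) + X ^ N * C Polynomial.X

theorem constantCoeff_ballCoordinate {N : ℕ} (hN : N ≠ 0) {a : R⟦X⟧}
    (ha : constantCoeff a = 0) : constantCoeff (ballCoordinate N a) = 0 := by
  rw [ballCoordinate, map_add, map_mul, map_pow, constantCoeff_X, zero_pow hN, zero_mul, add_zero,
    ← coeff_zero_eq_constantCoeff_apply, coeff_map, Polynomial.coeff_coe, coeff_trunc,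
    if_pos (Nat.pos_of_ne_zero hN), coeff_zero_eq_constantCoeff_apply, ha, map_zero]

theorem derivativeCoeffs_ballCoordinate (N : ℕ) (a : R⟦X⟧) :
    derivativeCoeffs R (ballCoordinate N a) = X ^ N := by
  rw [ballCoordinate, map_add, derivativeCoeffs_map_C, zero_add,
    derivation_X_pow_mul _ derivativeCoeffs_X, derivativeCoeffs_C_X, mul_one]

end BallCoordinate

theorem exists_hasInitialTerm_ballCoordinate_sub {K : Type*} [Field K] (N : ℕ) (a b : K⟦X⟧) :
    ∃ e c, IsUnit c ∧ HasInitialTerm (ballCoordinate N a - map Polynomial.C b) e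
      (if trunc N a = trunc N b then Polynomial.X - Polynomial.C (coeff N b) else c) := by
  set δ : K⟦X⟧ := trunc N a - b
  have hsplit : ballCoordinate N a - map Polynomial.C b =
      map Polynomial.C δ + X ^ N * C Polynomial.X := by
    rw [ballCoordinate, map_sub]
    ring
  have hz : HasInitialTerm (X ^ N * C Polynomial.X : K[X]⟦X⟧) N Polynomial.X :=
    ⟨C Polynomial.X, rfl, constantCoeff_C _⟩
  have hδ : ∀ i < N, coeff i δ = coeff i (trunc N a - trunc N b : K⟦X⟧) := fun i hi => by
    simp [δ, coeff_trunc, hi]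
  split_ifs with h
  · refine ⟨N, 1, isUnit_one, ?_⟩
    have hδN : coeff N δ = -coeff N b := by
      rw [map_sub, Polynomial.coeff_coe, coeff_trunc, if_neg (lt_irrefl N), zero_sub]
    have := ((hasInitialTerm_of_coeff_eq_zero (P := δ) fun i hi => by simp [hδ i hi, h]).map
      Polynomial.C).add hz
    rwa [← hsplit, hδN, map_neg, neg_add_eq_sub] at this
  · have hex : ∃ i, i < N ∧ coeff i δ ≠ 0 := by
      by_contra! hall
      refine h (Polynomial.ext fun i => ?_)
      by_cases hi : i < N
      · simpa [hδ i hi, sub_eq_zero] using hall i hi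
      · simp [coeff_trunc, hi]
    obtain ⟨heN, he⟩ := Nat.find_spec hex
    refine ⟨Nat.find hex, Polynomial.C (coeff (Nat.find hex) δ),
      Polynomial.isUnit_C.2 he.isUnit, ?_⟩
    have hmin : ∀ i < Nat.find hex, coeff i δ = 0 := fun i hi => by
      simpa [(hi.trans heN)] using Nat.find_min hex hi
    simpa [← hsplit] using ((hasInitialTerm_of_coeff_eq_zero hmin).map Polynomial.C).add
      (hz.of_lt heN)

end PowerSeries

theorem coeff_toPS (m i : ℕ) (φ : PSer) : PowerSeries.coeff i (toPS m φ) = φ (i / m) :=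
  PowerSeries.coeff_mk _ _

theorem coeff_toPS_of_cast_eq_mul {m N : ℕ} (hm : 0 < m) {r : ℚ} (hN : (N : ℚ) = r * m)
    (φ : PSer) : PowerSeries.coeff N (toPS m φ) = φ r := by
  rw [coeff_toPS, hN, mul_div_cancel_right₀ _ (by positivity)]

theorem stretchF_eq_map_expand {m : ℕ} (hm : m ≠ 0) (g : ℂ⟦X⟧⟦X⟧) :
    stretchF m g = PowerSeries.map (PowerSeries.expand (R := ℂ) m hm).toRingHom g := by
  ext j : 1
  simp only [stretchF, PowerSeries.coeff_mk, PowerSeries.coeff_map]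
  ext i
  simp [stretch, PowerSeries.coeff_expand]

theorem hasDen.mul_right {m : ℕ} {φ : PSer} (h : hasDen m φ) {d : ℕ} (hd : d ≠ 0) :
    hasDen (m * d) φ := by
  intro q hq
  obtain ⟨i, rfl⟩ := h q hq
  refine ⟨i * d, ?_⟩
  push_cast
  rw [mul_div_mul_right _ _ (by exact_mod_cast hd)]

theorem expand_toPS {m d : ℕ} (hm : m ≠ 0) (hd : d ≠ 0) {φ : PSer} (h : hasDen m φ) :
    PowerSeries.expand d hd (toPS m φ) = toPS (m * d) φ := by
  ext i
  rw [PowerSeries.coeff_expand, coeff_toPS]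
  split_ifs with hdi
  · obtain ⟨j, rfl⟩ := hdi
    rw [Nat.mul_div_cancel_left _ (Nat.pos_of_ne_zero hd), coeff_toPS]
    push_cast
    rw [mul_comm (d : ℚ), mul_div_mul_right _ _ (by exact_mod_cast hd)]
  · rw [coeff_toPS]
    by_contra hne
    obtain ⟨j, hj⟩ := h _ (Ne.symm hne)
    rw [div_eq_div_iff (by positivity) (by positivity), Nat.cast_mul] at hj
    have hij : (i : ℚ) * m = (d * j : ℕ) * m := by rw [hj]; push_cast; ring
    exact hdi ⟨j, by exact_mod_cast mul_right_cancel₀ (by positivity) hij⟩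

theorem pball_eq_of_mem {α β : PSer} {r : ℚ} (h : α ∈ pball β r) : pball α r = pball β r := by
  ext ψ
  exact ⟨fun hψ q hq => (h q hq).trans (hψ q hq), fun hψ q hq => (h q hq).symm.trans (hψ q hq)⟩

theorem trunc_toPS_eq_iff_mem_pball {m N : ℕ} (hm : 0 < m) {r : ℚ} (hN : (N : ℚ) = r * m)
    {φ ψ : PSer} (hφ : hasDen m φ) (hψ : hasDen m ψ) :
    PowerSeries.trunc N (toPS m φ) = PowerSeries.trunc N (toPS m ψ) ↔ ψ ∈ pball φ r := by
  have hlt (i : ℕ) : (i : ℚ) / m < r ↔ i < N := by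
    rw [div_lt_iff₀ (by positivity), ← hN, Nat.cast_lt]
  constructor
  · intro h q hq
    by_contra hne
    obtain ⟨i, rfl⟩ : ∃ i : ℕ, q = i / m := by
      by_cases hφq : φ q = 0
      · exact hψ q (by rwa [hφq, eq_comm] at hne)
      · exact hφ q hφq
    have := congrArg (Polynomial.coeff · i) h
    simp only [PowerSeries.coeff_trunc, (hlt i).1 hq, if_true, coeff_toPS] at this
    exact hne this
  · intro h
    ext i
    simp only [PowerSeries.coeff_trunc, coeff_toPS]
    split_ifs with hi
    exacts [h _ ((hlt i).2 hi), rfl]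

theorem Polynomial.iterate_derivative_ne_zero {R : Type*} [CommRing R] [IsDomain R] [CharZero R]
    {F : R[X]} {k : ℕ} (hk : k < F.natDegree) : derivative^[k] F ≠ 0 := by
  intro h
  have := congrArg (coeff · (F.natDegree - k)) h
  simp only [coeff_iterate_derivative, Nat.sub_add_cancel hk.le, coeff_zero, nsmul_eq_mul,
    mul_eq_zero, Nat.cast_eq_zero, Nat.descFactorial_eq_zero_iff_lt] at this
  rcases this with hlt | hlc
  · omega
  · exact leadingCoeff_ne_zero.2 (ne_zero_of_natDegree_gt hk) hlc

theorem cast_mul_num_toNat {r : ℚ} (hr : 0 < r) (m : ℕ) :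
    ((m * r.num.toNat : ℕ) : ℚ) = r * (m * r.den : ℕ) := by
  have hnum : ((r.num.toNat : ℕ) : ℚ) = r.num := by
    exact_mod_cast Int.toNat_of_nonneg (Rat.num_pos.2 hr).le
  push_cast
  rw [hnum, ← Rat.mul_den_eq_num r]
  ring

/-- The coefficient map `ℂ⟦x^(1/m)⟧ → ℂ[z]⟦x^(1/(m · den r))⟧`. -/
noncomputable def ballCoeffMap (r : ℚ) : ℂ⟦X⟧ →+* ℂ[X]⟦X⟧ :=
  (PowerSeries.map Polynomial.C).comp (PowerSeries.expand r.den r.den_ne_zero).toRingHom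

/-- The substitution `y = λ_B(t) + t ^ N z` in the variable `t = x ^ (1 / (m · den r))`, where
`N = r · m · den r`. -/
noncomputable def ballSubst (m : ℕ) (r : ℚ) (β : PSer) : ℂ⟦X⟧⟦X⟧ → ℂ[X]⟦X⟧ :=
  PowerSeries.eval₂Trunc (ballCoeffMap r)
    (PowerSeries.ballCoordinate (m * r.num.toNat) (toPS (m * r.den) β))

section BallSubst

open PowerSeries (HasInitialTerm ballCoordinate derivativeCoeffs)

variable {m : ℕ} {r : ℚ} {β : PSer}

theorem ballCoeffMap_toPS (hm : 0 < m) {ψ : PSer} (hψ : hasDen m ψ) :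
    ballCoeffMap r (toPS m ψ) = PowerSeries.map Polynomial.C (toPS (m * r.den) ψ) := by
  simp [ballCoeffMap, expand_toPS hm.ne' r.den_ne_zero hψ]

theorem derivativeCoeffs_ballCoeffMap (a : ℂ⟦X⟧) : derivativeCoeffs ℂ (ballCoeffMap r a) = 0 :=
  PowerSeries.derivativeCoeffs_map_C _

theorem constantCoeff_ballCoordinate_toPS (hm : 0 < m) (hr : 0 < r) (hβ : β 0 = 0) :
    PowerSeries.constantCoeff (ballCoordinate (m * r.num.toNat) (toPS (m * r.den) β)) = 0 :=
  PowerSeries.constantCoeff_ballCoordinate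
    (Nat.mul_ne_zero hm.ne' (by simpa using Rat.num_pos.2 hr))
    (by simpa [← PowerSeries.coeff_zero_eq_constantCoeff_apply, coeff_toPS] using hβ)

theorem iterate_derivativeCoeffs_ballSubst (hm : 0 < m) (hr : 0 < r) (hβ : β 0 = 0)
    (f : ℂ⟦X⟧⟦X⟧) (k : ℕ) :
    (⇑(derivativeCoeffs ℂ))^[k] (ballSubst m r β (stretchF m f)) =
      PowerSeries.X ^ (k * (m * r.num.toNat)) *
        ballSubst m r β (stretchF m ((d⁄dX _)^[k] f)) := by
  rw [ballSubst, PowerSeries.iterate_derivation_eval₂Trunc _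
    (constantCoeff_ballCoordinate_toPS hm hr hβ) PowerSeries.derivativeCoeffs_X
    derivativeCoeffs_ballCoeffMap (PowerSeries.derivativeCoeffs_ballCoordinate _ _),
    stretchF_eq_map_expand hm.ne', stretchF_eq_map_expand hm.ne',
    PowerSeries.map_iterate_derivative]

theorem exists_hasInitialTerm_ballSubst (hm : 0 < m) (hr : 0 < r) (hβ : hasDen m β)
    (hβ0 : β 0 = 0) {ι : Type*} [Fintype ι] {g : ℂ⟦X⟧⟦X⟧} (u : (ℂ⟦X⟧⟦X⟧)ˣ) (ψ : ι → PSer)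
    (hψ : ∀ j, hasDen m (ψ j))
    (hfac : g = u * ∏ j, (PowerSeries.X - PowerSeries.C (toPS m (ψ j)))) :
    ∃ e a, IsUnit a ∧ HasInitialTerm (ballSubst m r β g) e
      (a * ∏ j ∈ Finset.univ.filter (fun j => ψ j ∈ pball β r), (X - C (ψ j r))) := by
  have hN := cast_mul_num_toNat hr m
  have hm' : 0 < m * r.den := Nat.mul_pos hm r.den_pos
  have hW := constantCoeff_ballCoordinate_toPS hm hr hβ0
  set Φ := PowerSeries.eval₂TruncHom (ballCoeffMap r) hW
  choose e c hc h using fun j => PowerSeries.exists_hasInitialTerm_ballCoordinate_sub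
    (m * r.num.toNat) (toPS (m * r.den) β) (toPS (m * r.den) (ψ j))
  have hprod := PowerSeries.HasInitialTerm.prod Finset.univ fun j _ => h j
  simp only [trunc_toPS_eq_iff_mem_pball hm' hN (hβ.mul_right r.den_ne_zero)
    ((hψ _).mul_right r.den_ne_zero), coeff_toPS_of_cast_eq_mul hm' hN, Finset.prod_ite] at hprod
  have himage : Φ g = Φ u *
      ∏ j, (ballCoordinate (m * r.num.toNat) (toPS (m * r.den) β) -
        PowerSeries.map Polynomial.C (toPS (m * r.den) (ψ j))) := by
    rw [hfac, map_mul, map_prod]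
    congr 1
    refine Finset.prod_congr rfl fun j _ => ?_
    rw [map_sub, PowerSeries.eval₂TruncHom_X hW, PowerSeries.eval₂TruncHom_C hW,
      ballCoeffMap_toPS hm (hψ j)]
  refine ⟨0 + ∑ j, e j,
    PowerSeries.constantCoeff (Φ u) * ∏ j ∈ Finset.univ.filter (fun j => ψ j ∉ pball β r), c j,
    ((u.isUnit.map Φ).map PowerSeries.constantCoeff).mul (IsUnit.prod_iff.2 fun j _ => hc j), ?_⟩
  rw [ballSubst, ← PowerSeries.eval₂TruncHom_apply hW, himage, mul_assoc,
    mul_comm (∏ j ∈ _, c j)]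
  exact (PowerSeries.hasInitialTerm_zero _).mul hprod

end BallSubst

theorem exists_iterate_derivative_eq_C_mul {K : Type*} [Field K] [CharZero K] {P : K[X]⟦X⟧}
    {a b F G : K[X]} {k e e' : ℕ} (ha : IsUnit a) (hb : IsUnit b) (hk : k < F.natDegree)
    (hG : G ≠ 0) (hP : PowerSeries.HasInitialTerm P e (derivative^[k] (a * F)))
    (hP' : PowerSeries.HasInitialTerm P e' (b * G)) :
    ∃ c : K, c ≠ 0 ∧ derivative^[k] F = C c * G := by
  obtain ⟨a₀, ha₀, rfl⟩ := Polynomial.isUnit_iff.1 ha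
  obtain ⟨b₀, hb₀, rfl⟩ := Polynomial.isUnit_iff.1 hb
  rw [iterate_derivative_C_mul] at hP
  have h := hP.eq hP' (mul_ne_zero (C_ne_zero.2 ha₀.ne_zero) (iterate_derivative_ne_zero hk))
    (mul_ne_zero (C_ne_zero.2 hb₀.ne_zero) hG)
  refine ⟨a₀⁻¹ * b₀, mul_ne_zero (inv_ne_zero ha₀.ne_zero) hb₀.ne_zero, ?_⟩
  rw [C_mul, mul_assoc, ← h, ← mul_assoc, ← C_mul, inv_mul_cancel₀ ha₀.ne_zero, C_1, one_mul]

theorem stmt13_general (f : PowerSeries (PowerSeries ℂ)) (n : ℕ)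
    (k : ℕ)
    (m : ℕ) (hm : 0 < m)
    -- Newton–Puiseux factorization of `f`:
    (αs : Fin n → PSer) (hαden : ∀ j, hasDen m (αs j)) (hαpos : ∀ j, posOrder (αs j))
    (u : (PowerSeries (PowerSeries ℂ))ˣ)
    (hufact : stretchF m f = (u : PowerSeries (PowerSeries ℂ)) *
      ∏ j : Fin n, (PowerSeries.X - PowerSeries.C (R := PowerSeries ℂ) (toPS m (αs j))))
    -- Newton–Puiseux factorization of `∂^k f/∂y^k`:
    (γs : Fin (n - k) → PSer) (hγden : ∀ j, hasDen m (γs j))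
    (v : (PowerSeries (PowerSeries ℂ))ˣ)
    (hvfact : stretchF m (PowerSeries.derivativeFun^[k] f) =
      (v : PowerSeries (PowerSeries ℂ)) *
      ∏ j : Fin (n - k), (PowerSeries.X - PowerSeries.C (R := PowerSeries ℂ) (toPS m (γs j))))
    -- a pseudo-ball `B` of height `r`:
    (r : ℚ) (hr : 0 < r) (β : PSer)
    -- `k < deg F_B`:
    (hdeg : k < (Finset.univ.filter (fun j => αs j ∈ pball β r)).card) :
    ∃ c : ℂ, c ≠ 0 ∧
      derivative^[k] (∏ j ∈ Finset.univ.filter (fun j => αs j ∈ pball β r),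
          (X - C (αs j r))) =
        Polynomial.C c * ∏ j ∈ Finset.univ.filter (fun j => γs j ∈ pball β r),
          (X - C (γs j r)) := by
  -- Re-centre `B` at a root `αs ℓ ∈ B`: it lies on the grid `x ^ (1 / m)` and has no constant term.
  obtain ⟨ℓ, hℓ⟩ := Finset.card_pos.1 (Nat.zero_lt_of_lt hdeg)
  simp only [← pball_eq_of_mem (Finset.mem_filter.1 hℓ).2] at hdeg ⊢
  have hℓ0 : αs ℓ 0 = 0 := hαpos ℓ 0 le_rfl
  change stretchF m ((d⁄dX _)^[k] f) = _ at hvfact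
  obtain ⟨eF, a, ha, hF⟩ := exists_hasInitialTerm_ballSubst (r := r) hm hr (hαden ℓ) hℓ0 u αs
    hαden hufact
  obtain ⟨eG, b, hb, hG⟩ := exists_hasInitialTerm_ballSubst (r := r) hm hr (hαden ℓ) hℓ0 v γs
    hγden hvfact
  have hG' := hG.X_pow_mul (k * (m * r.num.toNat))
  rw [← iterate_derivativeCoeffs_ballSubst hm hr hℓ0] at hG'
  exact exists_iterate_derivative_eq_C_mul ha hb (by simpa using hdeg)
    (Finset.prod_ne_zero_iff.2 fun j _ => X_sub_C_ne_zero _) (hF.iterate_derivativeCoeffs k) hG'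

theorem stmt13 (f : PowerSeries (PowerSeries ℂ)) (n : ℕ) (hn : 1 < n)
    -- `ord f(0,y) = n`:
    (hord : (∀ j < n, PowerSeries.coeff (R := ℂ) j
        (PowerSeries.map (PowerSeries.constantCoeff (R := ℂ)) f) = 0) ∧
      PowerSeries.coeff (R := ℂ) n (PowerSeries.map (PowerSeries.constantCoeff (R := ℂ)) f) ≠ 0)
    (k : ℕ) (hk1 : 1 ≤ k) (hkn : k < n)
    (m : ℕ) (hm : 0 < m)
    -- Newton–Puiseux factorization of `f`:
    (αs : Fin n → PSer) (hαden : ∀ j, hasDen m (αs j)) (hαpos : ∀ j, posOrder (αs j))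
    (u : (PowerSeries (PowerSeries ℂ))ˣ)
    (hufact : stretchF m f = (u : PowerSeries (PowerSeries ℂ)) *
      ∏ j : Fin n, (PowerSeries.X - PowerSeries.C (R := PowerSeries ℂ) (toPS m (αs j))))
    -- Newton–Puiseux factorization of `∂^k f/∂y^k`:
    (γs : Fin (n - k) → PSer) (hγden : ∀ j, hasDen m (γs j)) (hγpos : ∀ j, posOrder (γs j))
    (v : (PowerSeries (PowerSeries ℂ))ˣ)
    (hvfact : stretchF m (PowerSeries.derivativeFun^[k] f) =
      (v : PowerSeries (PowerSeries ℂ)) *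
      ∏ j : Fin (n - k), (PowerSeries.X - PowerSeries.C (R := PowerSeries ℂ) (toPS m (γs j))))
    -- a pseudo-ball `B` of height `r`:
    (r : ℚ) (hr : 0 < r) (β : PSer)
    -- `k < deg F_B`:
    (hdeg : k < (Finset.univ.filter (fun j => αs j ∈ pball β r)).card) :
    ∃ c : ℂ, c ≠ 0 ∧
      derivative^[k] (∏ j ∈ Finset.univ.filter (fun j => αs j ∈ pball β r),
          (X - C (αs j r))) =
        Polynomial.C c * ∏ j ∈ Finset.univ.filter (fun j => γs j ∈ pball β r),
          (X - C (γs j r)) :=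
  stmt13_general f n k m hm αs hαden hαpos u hufact γs hγden v hvfact r hr β hdeg
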